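/- Let Ω ⊆ ℝ^d be open and bounded, let X = {0,1} be the two-point metric space with d(0,1) = 1, let U ⊆ Ω be measurable, and set f(x) := δ₀ for x ∈ U and f(x) := δ₁ for x ∈ Ω ∖ U. Then the map u ↦ ũ, where ũ(x) := u(x)({0}), is a one-to-one correspondence between weakly measurable functions u : Ω → P(X) and measurable functions ũ : Ω → [0,1] (with inverse ũ ↦ u(x) = ũ(x) δ₀ + (1 − ũ(x)) δ₁), and under this correspondence, for every λ ≥ 0, ∫_Ω W₁(f(x), u(x)) dx + λ TV_KR(u) = ‖1_U − ũ‖_{L¹(Ω)} + λ TV(ũ); in particular W₁(f(x),u(x)) = |1_U(x) − ũ(x)| pointwise and TV_KR(u) = TV(ũ). -/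

import Mathlib

open scoped Classical
open MeasureTheory ENNReal

attribute [local instance] MeasureTheory.Measure.Subtype.measureSpace

/-- The two-point metric space `X = {0,1}` with `d(0,1) = 1` (as a subspace of `ℝ`). -/
abbrev TwoPt : Type := ({0, 1} : Set ℝ)

/-- The point `0 ∈ X`. -/
def z0 : TwoPt := ⟨0, by simp⟩

/-- The point `1 ∈ X`. -/
def z1 : TwoPt := ⟨1, by simp⟩

/-- The Dirac measure `δ_z` as a Borel probability measure on `X`. -/
noncomputable def diracP (z : TwoPt) : ProbabilityMeasure TwoPt :=
  ⟨MeasureTheory.Measure.dirac z, inferInstance⟩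

/-- A function `u : Ω → P(X)` is weakly measurable if `x ↦ ∫_X g d(u x)` is measurable for
every (automatically continuous) `g : X → ℝ`. -/
def WeaklyMeasurable {d : ℕ} {Ω : Set (EuclideanSpace ℝ (Fin d))}
    (u : Ω → ProbabilityMeasure TwoPt) : Prop :=
  ∀ g : TwoPt → ℝ, Measurable fun x : Ω => ∫ z, g z ∂(u x : Measure TwoPt)

/-- `W₁(μ,ν) = sup { ∫ g dμ − ∫ g dν : g 1-Lipschitz }`. -/
noncomputable def W1 {X : Type*} [MeasurableSpace X] [MetricSpace X]
    (μ ν : ProbabilityMeasure X) : ℝ :=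
  sSup { r : ℝ | ∃ f : X → ℝ, LipschitzWith 1 f ∧
    r = ∫ z, f z ∂(μ : Measure X) - ∫ z, f z ∂(ν : Measure X) }

/-- The divergence in the `Ω`-variable of `p : ℝ^d × X → ℝ^d`. -/
noncomputable def divX {d : ℕ} {X : Type*}
    (p : EuclideanSpace ℝ (Fin d) → X → EuclideanSpace ℝ (Fin d))
    (x : EuclideanSpace ℝ (Fin d)) (z : X) : ℝ :=
  ∑ i, fderiv ℝ (fun y => p y z i) x (EuclideanSpace.single i 1)

/-- The total variation `TV_KR` of a measure-valued function `u : Ω → P(X)`. -/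
noncomputable def TVKR {d : ℕ} {X : Type*} [MeasurableSpace X] [MetricSpace X]
    (Ω : Set (EuclideanSpace ℝ (Fin d))) (u : Ω → ProbabilityMeasure X) : ℝ :=
  sSup { r : ℝ | ∃ p : EuclideanSpace ℝ (Fin d) → X → EuclideanSpace ℝ (Fin d),
    Continuous (Function.uncurry p) ∧
    HasCompactSupport p ∧ tsupport p ⊆ Ω ∧
    (∀ z : X, ContDiff ℝ 1 (fun x => p x z)) ∧
    (∀ x : EuclideanSpace ℝ (Fin d), LipschitzWith 1 (p x)) ∧
    r = ∫ x : Ω, ∫ z, -divX p (x : EuclideanSpace ℝ (Fin d)) z ∂(u x : Measure X) }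

/-- The classical total variation of a scalar function `ũ : Ω → ℝ`,
`TV(ũ) = sup { ∫_Ω ũ div φ dx : φ ∈ C¹_c(Ω,ℝ^d), ‖φ(x)‖₂ ≤ 1 }`. -/
noncomputable def TVc {d : ℕ} (Ω : Set (EuclideanSpace ℝ (Fin d))) (v : Ω → ℝ) : ℝ :=
  sSup { r : ℝ | ∃ φ : EuclideanSpace ℝ (Fin d) → EuclideanSpace ℝ (Fin d),
    ContDiff ℝ 1 φ ∧ HasCompactSupport φ ∧ tsupport φ ⊆ Ω ∧
    (∀ x : EuclideanSpace ℝ (Fin d), ‖φ x‖ ≤ 1) ∧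
    r = ∫ x : Ω, v x *
      (∑ i, fderiv ℝ (fun y => φ y i) (x : EuclideanSpace ℝ (Fin d))
        (EuclideanSpace.single i 1)) }

/-! A Borel probability measure `μ` on `{0,1}` is `a δ₀ + (1 - a) δ₁` with `a = μ{0}`, so
`∫ g dμ - ∫ g dν = (a - b) (g 0 - g 1)`; as `|g 0 - g 1| ≤ d(0,1) = 1` for 1-Lipschitz `g`, with
equality for `g = d(·, 1)` or `d(·, 0)`, this gives `W₁(μ, ν) = |a - b|`.

For a Kantorovich–Rubinstein test field `p`, `∫_X -div_x p du(x) = ũ(x) div φ(x) - div p(·,1)(x)`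
with `φ = p(·,1) - p(·,0)`, and `div p(·,1)` integrates to zero since `p(·,1)` is compactly
supported in `Ω`. The 1-Lipschitz condition on `p(x, ·)` says precisely `‖φ‖ ≤ 1`, and every
admissible `φ` arises from `p(x, z) = (z - 1) φ(x)`, so the suprema defining `TV_KR(u)` and
`TV(ũ)` range over the same set. -/

open Set Function

instance : Finite TwoPt := Set.toFinite _

lemma TwoPt.eq_z0_or_eq_z1 (z : TwoPt) : z = z0 ∨ z = z1 := by
  obtain ⟨v, rfl | rfl⟩ := z
  exacts [Or.inl rfl, Or.inr rfl]

lemma z0_ne_z1 : z0 ≠ z1 := by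
  simp [z0, z1]

lemma dist_z0_z1 : dist z0 z1 = 1 := by
  simp [z0, z1, Subtype.dist_eq]

lemma compl_singleton_z0 : ({z0}ᶜ : Set TwoPt) = {z1} := by
  ext z
  rcases z.eq_z0_or_eq_z1 with rfl | rfl <;> simp [z0_ne_z1, z0_ne_z1.symm]

noncomputable def twoPtMeasure (a : ℝ) : Measure TwoPt :=
  ENNReal.ofReal a • Measure.dirac z0 + ENNReal.ofReal (1 - a) • Measure.dirac z1

lemma twoPtMeasure_singleton_z0 (a : ℝ) : twoPtMeasure a {z0} = ENNReal.ofReal a := by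
  simp [twoPtMeasure, z0_ne_z1]

lemma twoPtMeasure_singleton_z1 (a : ℝ) : twoPtMeasure a {z1} = ENNReal.ofReal (1 - a) := by
  simp [twoPtMeasure, z0_ne_z1]

lemma isProbabilityMeasure_twoPtMeasure {a : ℝ} (ha : a ∈ Icc 0 1) :
    IsProbabilityMeasure (twoPtMeasure a) := by
  constructor
  simp [twoPtMeasure, ← ENNReal.ofReal_add ha.1 (sub_nonneg.2 ha.2)]

lemma eq_twoPtMeasure (μ : Measure TwoPt) [IsProbabilityMeasure μ] :
    μ = twoPtMeasure (μ.real {z0}) := by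
  refine Measure.ext_of_singleton fun z => ?_
  rcases z.eq_z0_or_eq_z1 with rfl | rfl
  · rw [twoPtMeasure_singleton_z0, ofReal_measureReal]
  · rw [twoPtMeasure_singleton_z1, ← probReal_compl_eq_one_sub (measurableSet_singleton _),
      compl_singleton_z0, ofReal_measureReal]

lemma integral_twoPtMeasure {a : ℝ} (ha : a ∈ Icc 0 1) (g : TwoPt → ℝ) :
    ∫ z, g z ∂twoPtMeasure a = a * g z0 + (1 - a) * g z1 := by
  have hg : Integrable g (Measure.dirac z0) := .of_finite
  have hg' : Integrable g (Measure.dirac z1) := .of_finite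
  rw [twoPtMeasure, integral_add_measure (hg.smul_measure ofReal_ne_top)
    (hg'.smul_measure ofReal_ne_top), integral_smul_measure, integral_smul_measure,
    integral_dirac, integral_dirac, toReal_ofReal ha.1, toReal_ofReal (sub_nonneg.2 ha.2),
    smul_eq_mul, smul_eq_mul]

lemma measureReal_z0_mem_Icc (μ : Measure TwoPt) [IsProbabilityMeasure μ] :
    μ.real {z0} ∈ Icc 0 1 :=
  ⟨measureReal_nonneg, measureReal_le_one⟩

lemma integral_twoPt (μ : Measure TwoPt) [IsProbabilityMeasure μ] (g : TwoPt → ℝ) :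
    ∫ z, g z ∂μ = μ.real {z0} * g z0 + (1 - μ.real {z0}) * g z1 := by
  conv_lhs => rw [eq_twoPtMeasure μ]
  exact integral_twoPtMeasure (measureReal_z0_mem_Icc μ) g

lemma W1_twoPt (μ ν : ProbabilityMeasure TwoPt) :
    W1 μ ν = |(μ : Measure TwoPt).real {z0} - (ν : Measure TwoPt).real {z0}| := by
  set a := (μ : Measure TwoPt).real {z0}
  set b := (ν : Measure TwoPt).real {z0}
  have hdiff : ∀ g : TwoPt → ℝ, ∫ z, g z ∂(μ : Measure TwoPt) - ∫ z, g z ∂(ν : Measure TwoPt)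
      = (a - b) * (g z0 - g z1) := fun g => by
    rw [integral_twoPt, integral_twoPt]; ring
  refine IsGreatest.csSup_eq ⟨?_, ?_⟩
  · rcases le_total b a with hab | hab
    · refine ⟨(dist · z1), LipschitzWith.dist_left z1, ?_⟩
      rw [hdiff, abs_of_nonneg (sub_nonneg.2 hab), dist_z0_z1, dist_self]; ring
    · refine ⟨(dist · z0), LipschitzWith.dist_left z0, ?_⟩
      rw [hdiff, abs_of_nonpos (sub_nonpos.2 hab), dist_self, dist_comm, dist_z0_z1]; ring
  · rintro r ⟨g, hg, rfl⟩
    have hg01 : |g z0 - g z1| ≤ 1 := by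
      simpa [dist_z0_z1, Real.dist_eq] using hg.dist_le_mul z0 z1
    rw [hdiff]
    calc (a - b) * (g z0 - g z1) ≤ |a - b| * |g z0 - g z1| := by
          rw [← abs_mul]; exact le_abs_self _
      _ ≤ |a - b| := mul_le_of_le_one_right (abs_nonneg _) hg01

section Divergence

variable {d : ℕ}

noncomputable def divergence (φ : EuclideanSpace ℝ (Fin d) → EuclideanSpace ℝ (Fin d))
    (x : EuclideanSpace ℝ (Fin d)) : ℝ :=
  ∑ i, fderiv ℝ (fun y => φ y i) x (EuclideanSpace.single i 1)

variable {φ ψ : EuclideanSpace ℝ (Fin d) → EuclideanSpace ℝ (Fin d)}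

lemma ContDiff.euclidean_apply (hφ : ContDiff ℝ 1 φ) (i : Fin d) :
    ContDiff ℝ 1 fun y => φ y i :=
  (EuclideanSpace.proj (𝕜 := ℝ) i).contDiff.comp hφ

lemma continuous_divergence (hφ : ContDiff ℝ 1 φ) : Continuous (divergence φ) :=
  continuous_finsetSum _ fun i _ =>
    ((hφ.euclidean_apply i).continuous_fderiv one_ne_zero).clm_apply continuous_const

lemma support_divergence_subset (φ : EuclideanSpace ℝ (Fin d) → EuclideanSpace ℝ (Fin d)) :
    support (divergence φ) ⊆ tsupport φ := by
  intro x hx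
  by_contra hxφ
  refine hx (Finset.sum_eq_zero fun i _ => ?_)
  have hsub : tsupport (fun y => φ y i) ⊆ tsupport φ :=
    tsupport_comp_subset (g := fun v : EuclideanSpace ℝ (Fin d) => v i) rfl φ
  rw [image_eq_zero_of_notMem_tsupport (fun h => hxφ (hsub (tsupport_fderiv_subset ℝ h)))]
  rfl

lemma HasCompactSupport.divergence (hφ : HasCompactSupport φ) :
    HasCompactSupport (divergence φ) :=
  hφ.mono' (support_divergence_subset φ)

lemma divergence_sub (hφ : ContDiff ℝ 1 φ) (hψ : ContDiff ℝ 1 ψ) (x : EuclideanSpace ℝ (Fin d)) :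
    divergence (fun y => φ y - ψ y) x = divergence φ x - divergence ψ x := by
  simp only [divergence, ← Finset.sum_sub_distrib]
  refine Finset.sum_congr rfl fun i _ => ?_
  rw [show (fun y => (φ y - ψ y) i) = fun y => φ y i - ψ y i from rfl,
    fderiv_fun_sub ((hφ.euclidean_apply i).differentiable one_ne_zero x)
      ((hψ.euclidean_apply i).differentiable one_ne_zero x)]
  rfl

lemma divergence_const_smul (hφ : ContDiff ℝ 1 φ) (c : ℝ) (x : EuclideanSpace ℝ (Fin d)) :
    divergence (fun y => c • φ y) x = c * divergence φ x := by
  simp only [divergence, Finset.mul_sum]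
  refine Finset.sum_congr rfl fun i _ => ?_
  rw [show (fun y => (c • φ y) i) = fun y => c • φ y i from rfl,
    fderiv_fun_const_smul ((hφ.euclidean_apply i).differentiable one_ne_zero x)]
  rfl

lemma integral_divergence_eq_zero (hφ : ContDiff ℝ 1 φ) (hs : HasCompactSupport φ) :
    ∫ x, divergence φ x = 0 := by
  have hφi := hφ.euclidean_apply
  have hsi : ∀ i, HasCompactSupport fun y => φ y i := fun i =>
    hs.comp_left (g := fun v : EuclideanSpace ℝ (Fin d) => v i) rfl
  have hint : ∀ i, Integrable fun x => fderiv ℝ (fun y => φ y i) x (EuclideanSpace.single i 1) :=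
    fun i => (((hφi i).continuous_fderiv one_ne_zero).clm_apply continuous_const)
      |>.integrable_of_hasCompactSupport ((hsi i).fderiv_apply ℝ _)
  unfold divergence
  rw [integral_finsetSum _ fun i _ => hint i]
  refine Finset.sum_eq_zero fun i _ => ?_
  have := integral_mul_fderiv_eq_neg_fderiv_mul_of_integrable (μ := volume)
    (f := fun _ => (1 : ℝ)) (g := fun y => φ y i) (v := EuclideanSpace.single i 1)
    (by simp) (by simpa using hint i)
    (by simpa using ((hφi i).continuous.integrable_of_hasCompactSupport (hsi i)))
    (fun _ _ => differentiableAt_const _)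
    (fun x _ => (hφi i).differentiable one_ne_zero x)
  simpa using this

variable {Ω : Set (EuclideanSpace ℝ (Fin d))}

lemma Continuous.integrable_subtype_of_hasCompactSupport {h : EuclideanSpace ℝ (Fin d) → ℝ}
    (hc : Continuous h) (hΩ : MeasurableSet Ω) (hs : HasCompactSupport h) :
    Integrable fun x : Ω => h x :=
  (integrableOn_iff_comap_subtypeVal hΩ).1 (hc.integrable_of_hasCompactSupport hs).integrableOn

lemma integral_subtype_divergence_eq_zero (hΩ : MeasurableSet Ω) (hφ : ContDiff ℝ 1 φ)
    (hs : HasCompactSupport φ) (hsΩ : tsupport φ ⊆ Ω) : ∫ x : Ω, divergence φ x = 0 := by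
  rw [integral_subtype hΩ, setIntegral_eq_integral_of_forall_compl_eq_zero
    fun x hx => notMem_support.1 fun h => hx (hsΩ (support_divergence_subset φ h)),
    integral_divergence_eq_zero hφ hs]

end Divergence

section TotalVariation

variable {d : ℕ}

lemma divX_eq_divergence (p : EuclideanSpace ℝ (Fin d) → TwoPt → EuclideanSpace ℝ (Fin d))
    (x : EuclideanSpace ℝ (Fin d)) (z : TwoPt) : divX p x z = divergence (fun y => p y z) x :=
  rfl

lemma integral_neg_divX_twoPt (μ : Measure TwoPt) [IsProbabilityMeasure μ]
    {p : EuclideanSpace ℝ (Fin d) → TwoPt → EuclideanSpace ℝ (Fin d)}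
    (hp : ∀ z, ContDiff ℝ 1 fun y => p y z) (x : EuclideanSpace ℝ (Fin d)) :
    ∫ z, -divX p x z ∂μ =
      μ.real {z0} * divergence (fun y => p y z1 - p y z0) x - divergence (fun y => p y z1) x := by
  rw [integral_twoPt, divX_eq_divergence, divX_eq_divergence, divergence_sub (hp z1) (hp z0)]
  ring

lemma integral_neg_divX_smul_twoPt (μ : Measure TwoPt) [IsProbabilityMeasure μ]
    {φ : EuclideanSpace ℝ (Fin d) → EuclideanSpace ℝ (Fin d)} (hφ : ContDiff ℝ 1 φ)
    (x : EuclideanSpace ℝ (Fin d)) :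
    ∫ z, -divX (fun y (z : TwoPt) => ((z : ℝ) - 1) • φ y) x z ∂μ =
      μ.real {z0} * divergence φ x := by
  rw [integral_twoPt, divX_eq_divergence, divX_eq_divergence, divergence_const_smul hφ,
    divergence_const_smul hφ]
  norm_num [z0, z1]

variable {Ω : Set (EuclideanSpace ℝ (Fin d))}

lemma integral_neg_divX_eq_integral_mul_divergence (hΩ : MeasurableSet Ω)
    {u : Ω → ProbabilityMeasure TwoPt} (hu : Measurable fun x => (u x : Measure TwoPt).real {z0})
    {p : EuclideanSpace ℝ (Fin d) → TwoPt → EuclideanSpace ℝ (Fin d)}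
    (hp : ∀ z, ContDiff ℝ 1 fun y => p y z) (hps : HasCompactSupport p) (hpΩ : tsupport p ⊆ Ω) :
    ∫ x : Ω, ∫ z, -divX p x z ∂(u x : Measure TwoPt) =
      ∫ x : Ω, (u x : Measure TwoPt).real {z0} * divergence (fun y => p y z1 - p y z0) x := by
  let φ := fun y => p y z1 - p y z0
  have hφ : ContDiff ℝ 1 φ := (hp z1).sub (hp z0)
  have hpzs : ∀ z, HasCompactSupport fun y => p y z := fun z =>
    hps.comp_left (g := fun f : TwoPt → EuclideanSpace ℝ (Fin d) => f z) rfl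
  have hφs : HasCompactSupport φ := (hpzs z1).sub (hpzs z0)
  have hp1Ω : tsupport (fun y => p y z1) ⊆ Ω :=
    (tsupport_comp_subset (g := fun f : TwoPt → EuclideanSpace ℝ (Fin d) => f z1) rfl p).trans hpΩ
  have hint : Integrable fun x : Ω => (u x : Measure TwoPt).real {z0} * divergence φ x :=
    ((continuous_divergence hφ).integrable_subtype_of_hasCompactSupport hΩ hφs.divergence).bdd_mul
      hu.aestronglyMeasurable (c := 1) (ae_of_all _ fun x => by simp)
  refine (integral_congr_ae (ae_of_all _ fun x : Ω => integral_neg_divX_twoPt _ hp x)).trans ?_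
  rw [integral_sub hint ((continuous_divergence (hp z1)).integrable_subtype_of_hasCompactSupport
      hΩ (hpzs z1).divergence),
    integral_subtype_divergence_eq_zero hΩ (hp z1) (hpzs z1) hp1Ω, sub_zero]

lemma TVKR_twoPt_eq_TVc (hΩ : MeasurableSet Ω) {u : Ω → ProbabilityMeasure TwoPt}
    (hu : Measurable fun x => (u x : Measure TwoPt).real {z0}) :
    TVKR Ω u = TVc Ω fun x => (u x : Measure TwoPt).real {z0} := by
  unfold TVKR TVc
  congr 1
  ext r
  constructor
  · rintro ⟨p, -, hps, hpΩ, hp, hlip, rfl⟩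
    let L := fun f : TwoPt → EuclideanSpace ℝ (Fin d) => f z1 - f z0
    have hL : L 0 = 0 := by simp [L]
    refine ⟨fun y => p y z1 - p y z0, (hp z1).sub (hp z0), hps.comp_left (g := L) hL,
      (tsupport_comp_subset (g := L) hL p).trans hpΩ, fun y => ?_,
      integral_neg_divX_eq_integral_mul_divergence hΩ hu hp hps hpΩ⟩
    simpa [dist_eq_norm, dist_comm z1 z0, dist_z0_z1] using (hlip y).dist_le_mul z1 z0
  · rintro ⟨φ, hφ, hφs, hφΩ, hφ1, rfl⟩
    let L := fun (v : EuclideanSpace ℝ (Fin d)) (z : TwoPt) => ((z : ℝ) - 1) • v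
    have hL : L 0 = 0 := by ext; simp [L]
    refine ⟨fun y z => ((z : ℝ) - 1) • φ y, by fun_prop, hφs.comp_left (g := L) hL,
      (tsupport_comp_subset (g := L) hL φ).trans hφΩ, fun z => hφ.const_smul _, fun y => ?_,
      (integral_congr_ae (ae_of_all _ fun x : Ω =>
        integral_neg_divX_smul_twoPt (u x : Measure TwoPt) hφ x)).symm⟩
    refine LipschitzWith.of_dist_le_mul fun a b => ?_
    rw [dist_eq_norm, ← sub_smul, sub_sub_sub_cancel_right, norm_smul, NNReal.coe_one, one_mul,
      Subtype.dist_eq, Real.dist_eq, Real.norm_eq_abs]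
    exact mul_le_of_le_one_right (abs_nonneg _) (hφ1 y)

end TotalVariation

section Correspondence

variable {d : ℕ} {Ω : Set (EuclideanSpace ℝ (Fin d))}

lemma WeaklyMeasurable.measurable_measureReal_z0 {u : Ω → ProbabilityMeasure TwoPt}
    (hu : WeaklyMeasurable u) : Measurable fun x => (u x : Measure TwoPt).real {z0} := by
  simpa only [integral_indicator_one (measurableSet_singleton z0)] using
    hu (({z0} : Set TwoPt).indicator 1)

lemma exists_weaklyMeasurable_measureReal_z0_eq {v : Ω → ℝ} (hv : Measurable v)
    (hv01 : ∀ x, v x ∈ Icc 0 1) :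
    ∃ u : Ω → ProbabilityMeasure TwoPt, WeaklyMeasurable u ∧
      ∀ x, (u x : Measure TwoPt).real {z0} = v x := by
  refine ⟨fun x => ⟨twoPtMeasure (v x), isProbabilityMeasure_twoPtMeasure (hv01 x)⟩,
    fun g => ?_, fun x => ?_⟩
  · simp only [ProbabilityMeasure.coe_mk, integral_twoPtMeasure (hv01 _)]
    exact (hv.mul_const _).add ((measurable_const.sub hv).mul_const _)
  · simp [measureReal_def, twoPtMeasure_singleton_z0, toReal_ofReal (hv01 x).1]

end Correspondence

theorem stmt6_general {d : ℕ} (Ω : Set (EuclideanSpace ℝ (Fin d)))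
    (hΩo : IsOpen Ω)
    (U : Set (EuclideanSpace ℝ (Fin d)))
    (f : Ω → ProbabilityMeasure TwoPt)
    (hf : ∀ x : Ω, f x = if (x : EuclideanSpace ℝ (Fin d)) ∈ U then diracP z0 else diracP z1)
    (u : Ω → ProbabilityMeasure TwoPt) (hu : WeaklyMeasurable u)
    (ut : Ω → ℝ) (hut : ∀ x : Ω, ut x = ((u x : Measure TwoPt) {z0}).toReal) :
    -- `ũ` is measurable with values in `[0,1]`:
    (Measurable ut ∧ ∀ x : Ω, ut x ∈ Set.Icc (0 : ℝ) 1) ∧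
    -- the correspondence is recovered by `u = ũ δ₀ + (1 − ũ) δ₁` (injectivity):
    (∀ x : Ω, (u x : Measure TwoPt) =
      ENNReal.ofReal (ut x) • MeasureTheory.Measure.dirac z0 +
        ENNReal.ofReal (1 - ut x) • MeasureTheory.Measure.dirac z1) ∧
    -- every measurable `v : Ω → [0,1]` arises this way (surjectivity):
    (∀ v : Ω → ℝ, Measurable v → (∀ x, v x ∈ Set.Icc (0 : ℝ) 1) →
      ∃ u' : Ω → ProbabilityMeasure TwoPt, WeaklyMeasurable u' ∧
        ∀ x : Ω, ((u' x : Measure TwoPt) {z0}).toReal = v x) ∧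
    -- pointwise identification of the data term:
    (∀ x : Ω, W1 (f x) (u x) =
      |(if (x : EuclideanSpace ℝ (Fin d)) ∈ U then (1 : ℝ) else 0) - ut x|) ∧
    -- identification of the regularizers:
    TVKR Ω u = TVc Ω ut ∧
    -- the full energies agree:
    (∀ lam : ℝ, 0 ≤ lam →
      (∫ x : Ω, W1 (f x) (u x)) + lam * TVKR Ω u =
        (∫ x : Ω, |(if (x : EuclideanSpace ℝ (Fin d)) ∈ U then (1 : ℝ) else 0) - ut x|) +
          lam * TVc Ω ut) := by
  obtain rfl : ut = fun x => (u x : Measure TwoPt).real {z0} := funext hut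
  have hut_meas := hu.measurable_measureReal_z0
  have hW : ∀ x : Ω, W1 (f x) (u x) = |(if (x : EuclideanSpace ℝ (Fin d)) ∈ U then (1 : ℝ) else 0)
      - (u x : Measure TwoPt).real {z0}| := fun x => by
    rw [W1_twoPt, hf x]
    split_ifs <;> simp [diracP, measureReal_def, z0_ne_z1.symm]
  have hTV := TVKR_twoPt_eq_TVc hΩo.measurableSet hut_meas
  refine ⟨⟨hut_meas, fun x => measureReal_z0_mem_Icc _⟩, fun x => eq_twoPtMeasure _,
    fun v hv hv01 => exists_weaklyMeasurable_measureReal_z0_eq hv hv01, hW, hTV, fun lam _ => ?_⟩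
  rw [integral_congr_ae (ae_of_all _ hW), hTV]

/-- For `X = {0,1}` with `d(0,1)=1`, `U ⊆ Ω` measurable, and
`f = δ₀` on `U`, `f = δ₁` on `Ω ∖ U`: the map `u ↦ ũ`, `ũ(x) := u(x)({0})`, is a one-to-one
correspondence between weakly measurable `u : Ω → P(X)` and measurable `ũ : Ω → [0,1]`
(with inverse `ũ ↦ ũ δ₀ + (1−ũ) δ₁`), and under this correspondence
`∫_Ω W₁(f x, u x) dx + λ TV_KR(u) = ‖1_U − ũ‖_{L¹} + λ TV(ũ)`; in particular
`W₁(f x, u x) = |1_U(x) − ũ(x)|` pointwise and `TV_KR(u) = TV(ũ)`. -/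
theorem stmt6 {d : ℕ} (Ω : Set (EuclideanSpace ℝ (Fin d)))
    (hΩo : IsOpen Ω) (hΩb : Bornology.IsBounded Ω)
    (U : Set (EuclideanSpace ℝ (Fin d))) (hUΩ : U ⊆ Ω) (hUm : MeasurableSet U)
    (f : Ω → ProbabilityMeasure TwoPt)
    (hf : ∀ x : Ω, f x = if (x : EuclideanSpace ℝ (Fin d)) ∈ U then diracP z0 else diracP z1)
    (u : Ω → ProbabilityMeasure TwoPt) (hu : WeaklyMeasurable u)
    (ut : Ω → ℝ) (hut : ∀ x : Ω, ut x = ((u x : Measure TwoPt) {z0}).toReal) :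
    -- `ũ` is measurable with values in `[0,1]`:
    (Measurable ut ∧ ∀ x : Ω, ut x ∈ Set.Icc (0 : ℝ) 1) ∧
    -- the correspondence is recovered by `u = ũ δ₀ + (1 − ũ) δ₁` (injectivity):
    (∀ x : Ω, (u x : Measure TwoPt) =
      ENNReal.ofReal (ut x) • MeasureTheory.Measure.dirac z0 +
        ENNReal.ofReal (1 - ut x) • MeasureTheory.Measure.dirac z1) ∧
    -- every measurable `v : Ω → [0,1]` arises this way (surjectivity):
    (∀ v : Ω → ℝ, Measurable v → (∀ x, v x ∈ Set.Icc (0 : ℝ) 1) →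
      ∃ u' : Ω → ProbabilityMeasure TwoPt, WeaklyMeasurable u' ∧
        ∀ x : Ω, ((u' x : Measure TwoPt) {z0}).toReal = v x) ∧
    -- pointwise identification of the data term:
    (∀ x : Ω, W1 (f x) (u x) =
      |(if (x : EuclideanSpace ℝ (Fin d)) ∈ U then (1 : ℝ) else 0) - ut x|) ∧
    -- identification of the regularizers:
    TVKR Ω u = TVc Ω ut ∧
    -- the full energies agree:
    (∀ lam : ℝ, 0 ≤ lam →
      (∫ x : Ω, W1 (f x) (u x)) + lam * TVKR Ω u =
        (∫ x : Ω, |(if (x : EuclideanSpace ℝ (Fin d)) ∈ U then (1 : ℝ) else 0) - ut x|) +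
          lam * TVc Ω ut) :=
  stmt6_general Ω hΩo U f hf u hu ut hut
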